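/- Let s₀ < s₁ < ⋯ < s_k be integers, I_m = [0, 2^{s_m}], and define I*_k = I_k and I*_{m−1} = ⟨I_{m−1}, I*_m⟩ for m = k, k−1, …, 1. Then I*_0 ⊂ I*_1 ⊂ ⋯ ⊂ I*_k, and |J ∩ I*_{m−1}|/|J| = 1/2 for every m ∈ {1,…,k} and every dyadic interval J (i.e. an interval of the form [j·2^p, (j+1)·2^p] with j, p ∈ ℤ) contained in I*_m whose length belongs to (2^{s_{m−1}}, 2^{s_m}]; in particular |I*_m ∩ I*_{m−1}|/|I*_m| = 1/2 for every m ∈ {1,…,k}. -/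

import Mathlib

/-!
Every component of `I*_m` has the form `[2nC, (2n+1)C]` with `C = 2^{s_m}`, and `I*_{m-1}` is
obtained by keeping the odd-indexed subintervals of length `c = 2^{s_{m-1}}`. Hence, up to the
countably many right endpoints of components of `I*_m`, `I*_{m-1} = I*_m ∩ H` where
`H = ⋃ n, [2nc, (2n+1)c]`. A dyadic interval of length `2^p > c` starts at an even multiple
of `c`, so `H` covers exactly half of it. The last claim follows by summing over the components
of `I*_m`.
-/

open MeasureTheory Set
open scoped ENNReal

noncomputable section

/-- The set of left endpoints of the component intervals of `I*_{k-i}`, where the sets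
`I*_m` are obtained from `I*_k = [0, 2^{s_k}]` by repeatedly applying the operation
`⟨·,·⟩`: at each step, each component interval `[a, a + 2^{s_{m}}]` is replaced by the union
of its odd-indexed (1-based) subintervals `[a + 2t·2^{s_{m-1}}, a + (2t+1)·2^{s_{m-1}}]`,
`0 ≤ t < 2^{s_m - s_{m-1} - 1}`, of length `2^{s_{m-1}}`. -/
def leftEnds (s : ℕ → ℤ) (k : ℕ) : ℕ → Set ℝ
  | 0 => {0}
  | i + 1 =>
      ⋃ a ∈ leftEnds s k i,
        (fun t : ℕ => a + 2 * t * (2:ℝ) ^ s (k - i - 1)) ''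
          {t : ℕ | t < 2 ^ (s (k - i) - s (k - i - 1) - 1).toNat}

/-- The set `I*_m` of Lemma 2: `I*_k = I_k = [0, 2^{s_k}]` and
`I*_{m-1} = ⟨I_{m-1}, I*_m⟩` for `m = k, k-1, …, 1`. -/
def Istar (s : ℕ → ℤ) (k m : ℕ) : Set ℝ :=
  ⋃ a ∈ leftEnds s k (k - m), Set.Icc a (a + (2:ℝ) ^ s m)

open Function

lemma two_zpow_eq_pow_toNat_mul {p q : ℤ} (h : q ≤ p) :
    (2:ℝ) ^ p = 2 ^ (p - q).toNat * (2:ℝ) ^ q := by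
  rw [← zpow_natCast, ← zpow_add₀ two_ne_zero]
  congr 1
  omega

lemma two_zpow_eq_two_mul_natCast_mul {p q : ℤ} (h : q < p) :
    (2:ℝ) ^ p = 2 * ((2 ^ (p - q - 1).toNat : ℕ) : ℝ) * (2:ℝ) ^ q := by
  push_cast
  rw [two_zpow_eq_pow_toNat_mul (show q + 1 ≤ p by omega), zpow_add_one₀ two_ne_zero,
    show p - (q + 1) = p - q - 1 by ring]
  ring

lemma pairwise_disjoint_Icc_of_add_lt {ι : Type*} [LinearOrder ι] {f : ι → ℝ} {c : ℝ}
    (hf : ∀ i j, i < j → f i + c < f j) :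
    Pairwise (Disjoint on fun i => Icc (f i) (f i + c)) :=
  (pairwise_disjoint_on _).2 fun i j hij =>
    Set.disjoint_left.2 fun _ hi hj => (hf i j hij).not_ge (hj.1.trans hi.2)

/-- `⟨I, [a, a + 2Nc]⟩` for an interval `I` of length `c`. -/
def oddSubintervals (a c : ℝ) (N : ℕ) : Set ℝ :=
  ⋃ t ∈ Finset.range N, Icc (a + 2 * t * c) (a + 2 * t * c + c)

/-- `⟨[0, c], ℝ⟩`, for `ℝ` tiled by the intervals `[2nc, 2(n+1)c]`. -/
def evenBlocks (c : ℝ) : Set ℝ :=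
  ⋃ n : ℤ, Icc (2 * n * c) (2 * n * c + c)

section Blocks

variable {a c : ℝ} {N : ℕ}

lemma oddSubintervals_subset_Icc (hc : 0 ≤ c) :
    oddSubintervals a c N ⊆ Icc a (a + 2 * N * c) := by
  simp only [oddSubintervals, Finset.mem_range, iUnion_subset_iff]
  intro t ht x hx
  have : (t:ℝ) + 1 ≤ N := by exact_mod_cast ht
  constructor <;> nlinarith [hx.1, hx.2]

lemma volume_oddSubintervals (hc : 0 < c) :
    volume (oddSubintervals a c N) = N * ENNReal.ofReal c := by
  have hdisj : Pairwise (Disjoint on fun t : ℕ => Icc (a + 2 * t * c) (a + 2 * t * c + c)) :=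
    pairwise_disjoint_Icc_of_add_lt fun t t' htt' => by
      have : (t:ℝ) + 1 ≤ t' := by exact_mod_cast htt'
      nlinarith
  rw [oddSubintervals, measure_biUnion_finset (hdisj.set_pairwise _)
    fun _ _ => measurableSet_Icc]
  simp [Real.volume_Icc]

lemma Icc_inter_evenBlocks_ae_eq (hc : 0 < c) (n : ℤ) :
    (Icc (2 * n * c) (2 * n * c + 2 * N * c) ∩ evenBlocks c : Set ℝ)
      =ᵐ[volume] oddSubintervals (2 * n * c) c N := by
  have hsub : oddSubintervals (2 * n * c) c N
      ⊆ Icc (2 * n * c) (2 * n * c + 2 * N * c) ∩ evenBlocks c := by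
    refine subset_inter (oddSubintervals_subset_Icc hc.le) ?_
    simp only [oddSubintervals, Finset.mem_range, iUnion_subset_iff]
    intro t _ x hx
    refine mem_iUnion.2 ⟨n + t, ?_⟩
    push_cast
    convert hx using 2 <;> ring
  have hsup : Icc (2 * n * c) (2 * n * c + 2 * N * c) ∩ evenBlocks c
      ⊆ oddSubintervals (2 * n * c) c N ∪ {2 * n * c + 2 * N * c} := by
    rintro x ⟨hx, hxH⟩
    obtain ⟨l, hl⟩ := mem_iUnion.1 hxH
    have hnl : n < l + 1 := by
      have : (n:ℝ) < l + 1 := lt_of_mul_lt_mul_right (by linarith [hx.1, hl.2]) hc.le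
      exact_mod_cast this
    have hlN : l ≤ n + N := by
      have : (l:ℝ) ≤ n + N := le_of_mul_le_mul_right (by linarith [hx.2, hl.1]) hc
      exact_mod_cast this
    obtain ⟨t, rfl⟩ : ∃ t : ℕ, l = n + t := ⟨(l - n).toNat, by omega⟩
    push_cast at hl
    rcases (show t < N ∨ t = N by omega) with htN | rfl
    · refine Or.inl (mem_biUnion (Finset.mem_coe.2 (Finset.mem_range.2 htN)) ?_)
      constructor <;> linarith [hl.1, hl.2]
    · exact Or.inr (le_antisymm hx.2 (by linarith [hl.1]))
  have hnull : ({2 * n * c + 2 * N * c} : Set ℝ) =ᵐ[volume] (∅ : Set ℝ) :=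
    ae_eq_empty.2 (measure_singleton _)
  exact (hsup.eventuallyLE.trans (union_ae_eq_left_of_ae_eq_empty hnull).le).antisymm
    hsub.eventuallyLE

lemma volume_dyadic_inter_evenBlocks {p q : ℤ} (hqp : q < p) (j : ℤ) :
    volume (Icc ((j:ℝ) * 2 ^ p) ((j + 1) * 2 ^ p) ∩ evenBlocks (2 ^ q))
      = ENNReal.ofReal (2 ^ p) / 2 := by
  set N : ℕ := 2 ^ (p - q - 1).toNat
  have hc : (0:ℝ) < 2 ^ q := zpow_pos two_pos q
  have hp : (2:ℝ) ^ p = 2 * N * 2 ^ q := two_zpow_eq_two_mul_natCast_mul hqp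
  have hJ : Icc ((j:ℝ) * 2 ^ p) ((j + 1) * 2 ^ p)
      = Icc (2 * ((j * N : ℤ):ℝ) * 2 ^ q) (2 * ((j * N : ℤ):ℝ) * 2 ^ q + 2 * N * 2 ^ q) := by
    rw [hp]; push_cast; ring_nf
  rw [hJ, measure_congr (Icc_inter_evenBlocks_ae_eq hc _), volume_oddSubintervals hc, hp,
    ENNReal.ofReal_mul (by positivity), ENNReal.ofReal_mul (by positivity), ENNReal.ofReal_ofNat,
    ENNReal.ofReal_natCast, mul_assoc, mul_comm (2 : ℝ≥0∞),
    ENNReal.mul_div_cancel_right two_ne_zero ENNReal.ofNat_ne_top]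

end Blocks

section Istar

variable {s : ℕ → ℤ} {k m : ℕ}

lemma apply_pred_lt (hs : ∀ m < k, s m < s (m + 1)) (hm1 : 1 ≤ m) (hmk : m ≤ k) :
    s (m - 1) < s m := by
  simpa [Nat.sub_add_cancel hm1] using hs (m - 1) (by omega)

lemma leftEnds_subset_range (hs : ∀ m < k, s m ≤ s (m + 1)) (i : ℕ) :
    leftEnds s k i ⊆ range fun n : ℤ => 2 * n * (2:ℝ) ^ s (k - i) := by
  induction i with
  | zero => rintro a rfl; exact ⟨0, by simp⟩
  | succ i ih =>
    have hle : s (k - i - 1) ≤ s (k - i) := by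
      rcases Nat.lt_or_ge i k with hik | hik
      · simpa [show k - i - 1 + 1 = k - i by omega] using hs (k - i - 1) (by omega)
      · simp [show k - i = 0 by omega]
    simp only [leftEnds, iUnion_subset_iff, image_subset_iff]
    intro b hb t _
    obtain ⟨n, rfl⟩ := ih hb
    refine ⟨n * 2 ^ (s (k - i) - s (k - i - 1)).toNat + t, ?_⟩
    rw [show k - (i + 1) = k - i - 1 by omega, two_zpow_eq_pow_toNat_mul hle]
    push_cast
    ring

lemma leftEnds_sub_subset_range (hs : ∀ m < k, s m ≤ s (m + 1)) (hmk : m ≤ k) :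
    leftEnds s k (k - m) ⊆ range fun n : ℤ => 2 * n * (2:ℝ) ^ s m := by
  simpa [Nat.sub_sub_self hmk] using leftEnds_subset_range hs (k - m)

lemma measurableSet_Istar (hs : ∀ m < k, s m ≤ s (m + 1)) (m : ℕ) :
    MeasurableSet (Istar s k m) :=
  MeasurableSet.biUnion ((countable_range _).mono (leftEnds_subset_range hs _))
    fun _ _ => measurableSet_Icc

lemma Istar_pred_eq (hm1 : 1 ≤ m) (hmk : m ≤ k) :
    Istar s k (m - 1) = ⋃ a ∈ leftEnds s k (k - m),
      oddSubintervals a (2 ^ s (m - 1)) (2 ^ (s m - s (m - 1) - 1).toNat) := by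
  rw [Istar, show k - (m - 1) = k - m + 1 by omega, leftEnds,
    show k - (k - m) - 1 = m - 1 by omega, show k - (k - m) = m by omega]
  ext x
  simp [oddSubintervals]

lemma Istar_subset_Istar_succ (hs : ∀ m < k, s m < s (m + 1)) (hm : m < k) :
    Istar s k m ⊆ Istar s k (m + 1) := by
  have h := Istar_pred_eq (s := s) (m := m + 1) (by omega) hm
  rw [add_tsub_cancel_right] at h
  rw [h, Istar]
  refine iUnion₂_mono fun a _ => (oddSubintervals_subset_Icc (by positivity)).trans ?_
  rw [two_zpow_eq_two_mul_natCast_mul (hs m hm)]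

lemma Istar_pred_ae_eq (hs : ∀ m < k, s m < s (m + 1)) (hm1 : 1 ≤ m) (hmk : m ≤ k) :
    Istar s k (m - 1) =ᵐ[volume] (Istar s k m ∩ evenBlocks (2 ^ s (m - 1)) : Set ℝ) := by
  have hs' : ∀ m < k, s m ≤ s (m + 1) := fun m hm => (hs m hm).le
  set c : ℝ := 2 ^ s (m - 1)
  set N : ℕ := 2 ^ (s m - s (m - 1) - 1).toNat
  have hC : (2:ℝ) ^ s m = 2 * N * c :=
    two_zpow_eq_two_mul_natCast_mul (apply_pred_lt hs hm1 hmk)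
  rw [Istar_pred_eq hm1 hmk, Istar, iUnion₂_inter]
  refine ae_eq_set_biUnion ((countable_range _).mono (leftEnds_sub_subset_range hs' hmk))
    fun a ha => ?_
  obtain ⟨n, rfl⟩ := leftEnds_sub_subset_range hs' hmk ha
  have ha : 2 * (n:ℝ) * 2 ^ s m = 2 * ((n * 2 * N : ℤ) : ℝ) * c := by
    rw [hC]; push_cast; ring
  dsimp only
  rw [ha, hC]
  exact (Icc_inter_evenBlocks_ae_eq (zpow_pos two_pos _) _).symm

lemma volume_dyadic_inter_Istar_pred (hs : ∀ m < k, s m < s (m + 1)) (hm1 : 1 ≤ m)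
    (hmk : m ≤ k) {j p : ℤ} (hJ : Icc ((j:ℝ) * 2 ^ p) ((j + 1) * 2 ^ p) ⊆ Istar s k m)
    (hp : (2:ℝ) ^ s (m - 1) < 2 ^ p) :
    volume (Icc ((j:ℝ) * 2 ^ p) ((j + 1) * 2 ^ p) ∩ Istar s k (m - 1))
      = ENNReal.ofReal (2 ^ p) / 2 := by
  rw [measure_congr (Filter.EventuallyEq.rfl.inter (Istar_pred_ae_eq hs hm1 hmk)),
    ← inter_assoc, inter_eq_left.2 hJ,
    volume_dyadic_inter_evenBlocks ((zpow_lt_zpow_iff_right₀ one_lt_two).1 hp)]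

lemma volume_Istar_inter_Istar_pred (hs : ∀ m < k, s m < s (m + 1)) (hm1 : 1 ≤ m)
    (hmk : m ≤ k) :
    volume (Istar s k m ∩ Istar s k (m - 1)) = volume (Istar s k m) / 2 := by
  have hs' : ∀ m < k, s m ≤ s (m + 1) := fun m hm => (hs m hm).le
  set C : ℝ := 2 ^ s m
  have hL := leftEnds_sub_subset_range hs' hmk
  have hcount := (countable_range _).mono hL
  have hdisj : (leftEnds s k (k - m)).PairwiseDisjoint fun a => Icc a (a + C) := by
    have hZ := pairwise_disjoint_Icc_of_add_lt (c := C) (f := fun n : ℤ => 2 * n * C)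
      fun n n' h => by
        have : (n:ℝ) + 1 ≤ n' := by exact_mod_cast h
        nlinarith [zpow_pos (two_pos (α := ℝ)) (s m)]
    intro a ha a' ha' hne
    obtain ⟨n, rfl⟩ := hL ha
    obtain ⟨n', rfl⟩ := hL ha'
    exact hZ fun h => hne (by rw [h])
  have hhalf : ∀ a ∈ leftEnds s k (k - m),
      volume (Icc a (a + C) ∩ Istar s k (m - 1)) = ENNReal.ofReal C / 2 := by
    intro a ha
    obtain ⟨n, rfl⟩ := hL ha
    have hJ : Icc (2 * n * C) (2 * n * C + C)
        = Icc (((2 * n : ℤ) : ℝ) * C) ((((2 * n : ℤ) : ℝ) + 1) * C) := by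
      push_cast; ring_nf
    have hsub : Icc (2 * n * C) (2 * n * C + C) ⊆ Istar s k m :=
      subset_biUnion_of_mem (u := fun a => Icc a (a + C)) ha
    rw [hJ] at hsub ⊢
    exact volume_dyadic_inter_Istar_pred hs hm1 hmk hsub
      (zpow_lt_zpow_right₀ one_lt_two (apply_pred_lt hs hm1 hmk))
  rw [Istar, iUnion₂_inter, measure_biUnion hcount (hdisj.mono fun _ => inter_subset_left)
    fun _ _ => measurableSet_Icc.inter (measurableSet_Istar hs' _),
    measure_biUnion hcount hdisj fun _ _ => measurableSet_Icc]
  simp_rw [Real.volume_Icc, add_sub_cancel_left]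
  rw [tsum_congr fun a : leftEnds s k (k - m) => hhalf a a.2]
  simp only [div_eq_mul_inv, ENNReal.tsum_mul_right]

end Istar

/-- Lemma 2, parts 1) and 2): the sets `I*_m` are increasing, every dyadic interval `J`
contained in `I*_m` whose length lies in `(2^{s_{m-1}}, 2^{s_m}]` is half covered by
`I*_{m-1}`, and in particular `|I*_m ∩ I*_{m-1}| / |I*_m| = 1/2`. -/
theorem statement3 (k : ℕ) (s : ℕ → ℤ) (hs : ∀ m, m < k → s m < s (m + 1)) :
    (∀ m, m < k → Istar s k m ⊆ Istar s k (m + 1)) ∧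
    (∀ m, 1 ≤ m → m ≤ k → ∀ j p : ℤ,
      Set.Icc ((j : ℝ) * (2:ℝ) ^ p) (((j : ℝ) + 1) * (2:ℝ) ^ p) ⊆ Istar s k m →
      (2:ℝ) ^ p ∈ Set.Ioc ((2:ℝ) ^ s (m - 1)) ((2:ℝ) ^ s m) →
      volume (Set.Icc ((j : ℝ) * (2:ℝ) ^ p) (((j : ℝ) + 1) * (2:ℝ) ^ p) ∩ Istar s k (m - 1))
        = ENNReal.ofReal ((2:ℝ) ^ p) / 2) ∧
    (∀ m, 1 ≤ m → m ≤ k →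
      volume (Istar s k m ∩ Istar s k (m - 1)) = volume (Istar s k m) / 2) :=
  ⟨fun _ hm => Istar_subset_Istar_succ hs hm,
    fun _ hm1 hmk _ _ hJ hp => volume_dyadic_inter_Istar_pred hs hm1 hmk hJ hp.1,
    fun _ hm1 hmk => volume_Istar_inter_Istar_pred hs hm1 hmk⟩

end
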